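/- For all integers k ≥ 2, n ≥ 1, m ≥ 1, with r = m/n, for every real u0 ≥ 0 and all γ, η ∈ (0,1): (E[X(γ,η)])² = (2 · g_r(1/2, γ, η))^n. -/

import Mathlib

open Finset Filter Real

noncomputable section

abbrev Formula (n k m : ℕ) := Fin m → Fin k → Fin n × Bool

def clauseSat {n k : ℕ} (σ : Fin n → Bool) (c : Fin k → Fin n × Bool) : Prop :=
  ∃ j : Fin k, σ (c j).1 = (c j).2

instance {n k : ℕ} (σ : Fin n → Bool) (c : Fin k → Fin n × Bool) :
    Decidable (clauseSat σ c) := by unfold clauseSat; infer_instance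

def Hscore {n k m : ℕ} (σ : Fin n → Bool) (F : Formula n k m) : ℤ :=
  ∑ i : Fin m, ∑ j : Fin k, (if σ (F i j).1 = (F i j).2 then (1:ℤ) else -1)

def Uscore {n k m : ℕ} (σ : Fin n → Bool) (F : Formula n k m) : ℕ :=
  (Finset.univ.filter fun i => ¬ clauseSat σ (F i)).card

def EV {β : Type*} [Fintype β] (X : β → ℝ) : ℝ := (∑ x : β, X x) / (Fintype.card β)

def Xweight (n k m : ℕ) (u0 γ η : ℝ) (F : Formula n k m) : ℝ :=
  ∑ σ : Fin n → Bool,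
    γ ^ ((Hscore σ F : ℤ) : ℝ) * η ^ ((Uscore σ F : ℝ) - u0 * m)

/-- `f(α,γ,η)` from eq. (7) of the paper. -/
def ff (k : ℕ) (u0 α γ η : ℝ) : ℝ :=
  η ^ (-(2*u0)) *
    ((α * ((γ^2 + (γ^2)⁻¹)/2) + 1 - α)^k
      - 2*(1-η) * ((α * (γ^2)⁻¹ + (1-α))/2)^k
      + (1-η)^2 * (α * (γ^2)⁻¹/2)^k)

/-- `g_r(α,γ,η) = f(α,γ,η)^r / (α^α (1−α)^{1−α})`, with `0^0 = 1`
(automatic for `Real.rpow`). -/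
def gg (k : ℕ) (u0 r α γ η : ℝ) : ℝ :=
  ff k u0 α γ η ^ r / (α ^ α * (1-α) ^ (1-α))

/-- A positive base raised to a finite sum is the product of the powers. -/
lemma rpow_finset_sum {ι : Type*} {γ : ℝ} (hγ : 0 < γ) (s : Finset ι) (f : ι → ℝ) :
    γ ^ (∑ i ∈ s, f i) = ∏ i ∈ s, γ ^ f i := by
  classical
  induction s using Finset.cons_induction with
  | empty => simp
  | cons a s ha ih => rw [Finset.sum_cons, Finset.prod_cons, Real.rpow_add hγ, ih]

/-- Sum over all functions of a product factorizes. -/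
lemma sum_fun_prod {C : Type*} [Fintype C] (M : ℕ) (w : C → ℝ) :
    ∑ F : Fin M → C, ∏ i, w (F i) = (∑ c, w c) ^ M := by
  rw [Finset.sum_pow' Finset.univ w M, Fintype.piFinset_univ]

/-- Lemma 3 of the paper: for `r = m/n`,
`E[X(γ,η)]² = (2 · g_r(1/2, γ, η))^n`. -/
theorem first_moment_squared (k n m : ℕ) (hk : 2 ≤ k) (hn : 1 ≤ n) (hm : 1 ≤ m)
    (u0 γ η : ℝ) (hu0 : 0 ≤ u0) (hγ0 : 0 < γ) (hγ1 : γ < 1) (hη0 : 0 < η) (hη1 : η < 1) :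
    (EV (Xweight n k m u0 γ η))^2 =
      (2 * gg k u0 ((m : ℝ)/(n : ℝ)) (1/2) γ η)^n := by
  have hγ' : γ ≠ 0 := hγ0.ne'
  obtain ⟨x, hx⟩ : ∃ x : ℝ, x = (γ + γ⁻¹)/2 := ⟨_, rfl⟩
  obtain ⟨y, hy⟩ : ∃ y : ℝ, y = γ⁻¹/2 := ⟨_, rfl⟩
  obtain ⟨c, hc⟩ : ∃ c : ℝ, c = x^k - (1-η)*y^k := ⟨_, rfl⟩
  -- Step 1: closed form of ff at α = 1/2
  have hff : ff k u0 (1/2) γ η = η ^ (-(2*u0)) * c^2 := by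
    have h1 : (1/2 : ℝ) * ((γ^2 + (γ^2)⁻¹)/2) + 1 - 1/2 = x^2 := by
      rw [hx]; field_simp; ring
    have h2 : ((1/2 : ℝ) * (γ^2)⁻¹ + (1 - 1/2))/2 = x*y := by
      rw [hx, hy]; field_simp; ring
    have h3 : (1/2 : ℝ) * (γ^2)⁻¹/2 = y^2 := by
      rw [hy]; field_simp
    rw [ff, h1, h2, h3, pow_right_comm x 2 k, pow_right_comm y 2 k, mul_pow, hc]
    ring
  have hf_nonneg : 0 ≤ ff k u0 (1/2) γ η := by
    rw [hff]; positivity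
  -- The per-clause weight function
  set w : (Fin n → Bool) → (Fin k → Fin n × Bool) → ℝ :=
    fun σ cl => (∏ j, if σ (cl j).1 = (cl j).2 then γ else γ⁻¹) *
      (if clauseSat σ cl then (1:ℝ) else η) with hw
  -- Per-assignment, per-formula factorization
  have hterm : ∀ (σ : Fin n → Bool) (F : Formula n k m),
      γ ^ ((Hscore σ F : ℤ) : ℝ) * η ^ ((Uscore σ F : ℝ) - u0 * m)
        = η ^ (-(u0*(m:ℝ))) * ∏ i, w σ (F i) := by
    intro σ F
    have h1 : γ ^ ((Hscore σ F : ℤ) : ℝ)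
        = ∏ i, ∏ j, (if σ (F i j).1 = (F i j).2 then γ else γ⁻¹) := by
      have hcast : ((Hscore σ F : ℤ) : ℝ)
          = ∑ i, ∑ j, (if σ (F i j).1 = (F i j).2 then (1:ℝ) else -1) := by
        rw [Hscore]; push_cast; rfl
      rw [hcast, rpow_finset_sum hγ0]
      refine Finset.prod_congr rfl fun i _ => ?_
      rw [rpow_finset_sum hγ0]
      refine Finset.prod_congr rfl fun j _ => ?_
      split
      · exact Real.rpow_one γ
      · exact Real.rpow_neg_one γ
    have h2 : η ^ ((Uscore σ F : ℝ) - u0 * m)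
        = η ^ (-(u0*(m:ℝ))) * ∏ i, (if clauseSat σ (F i) then (1:ℝ) else η) := by
      have : ((Uscore σ F : ℝ) - u0 * m) = -(u0*(m:ℝ)) + (Uscore σ F : ℝ) := by ring
      rw [this, Real.rpow_add hη0, Real.rpow_natCast]
      congr 1
      rw [Uscore, ← Finset.prod_const, Finset.prod_filter]
      simp [ite_not]
    rw [h1, h2, hw]
    simp only [Finset.prod_mul_distrib]
    ring
  -- Per-clause sum is independent of σ
  obtain ⟨S, hS⟩ : ∃ S : ℝ, S = ((n:ℝ)*(γ+γ⁻¹))^k - (1-η)*((n:ℝ)*γ⁻¹)^k := ⟨_, rfl⟩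
  have hclause : ∀ σ : Fin n → Bool, (∑ cl : Fin k → Fin n × Bool, w σ cl) = S := by
    intro σ
    have hind : ∀ cl : Fin k → Fin n × Bool,
        (if clauseSat σ cl then (1:ℝ) else η)
          = 1 - (1-η) * ∏ j, (if σ (cl j).1 = (cl j).2 then (0:ℝ) else 1) := by
      intro cl
      by_cases h : clauseSat σ cl
      · obtain ⟨j, hj⟩ := h
        have hz : (∏ j, (if σ (cl j).1 = (cl j).2 then (0:ℝ) else 1)) = 0 :=
          Finset.prod_eq_zero (Finset.mem_univ j) (if_pos hj)
        rw [if_pos ⟨j, hj⟩, hz]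
        ring
      · rw [if_neg h, Finset.prod_eq_one, mul_one]
        · ring
        · intro j _
          simp only [clauseSat, not_exists] at h
          exact if_neg (h j)
    have hsplit : ∀ cl : Fin k → Fin n × Bool,
        w σ cl = (∏ j, (if σ (cl j).1 = (cl j).2 then γ else γ⁻¹))
          - (1-η) * ∏ j, (if σ (cl j).1 = (cl j).2 then (0:ℝ) else γ⁻¹) := by
      intro cl
      have hAB : (∏ j, (if σ (cl j).1 = (cl j).2 then γ else γ⁻¹))
          * (∏ j, (if σ (cl j).1 = (cl j).2 then (0:ℝ) else 1))
          = ∏ j, (if σ (cl j).1 = (cl j).2 then (0:ℝ) else γ⁻¹) := by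
        rw [← Finset.prod_mul_distrib]
        refine Finset.prod_congr rfl fun j _ => ?_
        split <;> simp
      rw [hw]
      simp only
      rw [hind cl]
      linear_combination (η - 1) * hAB
    have hsa : (∑ l : Fin n × Bool, (if σ l.1 = l.2 then γ else γ⁻¹)) = (n:ℝ)*(γ+γ⁻¹) := by
      rw [Fintype.sum_prod_type]
      have : ∀ i : Fin n, (∑ b : Bool, (if σ i = b then γ else γ⁻¹)) = γ + γ⁻¹ := by
        intro i
        rw [Fintype.sum_bool]
        cases h : σ i <;> simp <;> ring
      rw [Finset.sum_congr rfl fun i _ => this i, Finset.sum_const, Finset.card_univ,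
        Fintype.card_fin, nsmul_eq_mul]
    have hsb : (∑ l : Fin n × Bool, (if σ l.1 = l.2 then (0:ℝ) else γ⁻¹)) = (n:ℝ)*γ⁻¹ := by
      rw [Fintype.sum_prod_type]
      have : ∀ i : Fin n, (∑ b : Bool, (if σ i = b then (0:ℝ) else γ⁻¹)) = γ⁻¹ := by
        intro i
        rw [Fintype.sum_bool]
        cases h : σ i <;> simp
      rw [Finset.sum_congr rfl fun i _ => this i, Finset.sum_const, Finset.card_univ,
        Fintype.card_fin, nsmul_eq_mul]
    calc (∑ cl : Fin k → Fin n × Bool, w σ cl)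
        = (∑ cl : Fin k → Fin n × Bool, ∏ j, (if σ (cl j).1 = (cl j).2 then γ else γ⁻¹))
          - (1-η) * ∑ cl : Fin k → Fin n × Bool,
              ∏ j, (if σ (cl j).1 = (cl j).2 then (0:ℝ) else γ⁻¹) := by
          rw [Finset.sum_congr rfl fun cl _ => hsplit cl, Finset.sum_sub_distrib,
            Finset.mul_sum]
      _ = S := by
          rw [sum_fun_prod k (fun l : Fin n × Bool => if σ l.1 = l.2 then γ else γ⁻¹),
            sum_fun_prod k (fun l : Fin n × Bool => if σ l.1 = l.2 then (0:ℝ) else γ⁻¹),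
            hsa, hsb, hS]
  -- total sum over formulas
  have hsumF : (∑ F : Formula n k m, Xweight n k m u0 γ η F)
      = 2^n * (η ^ (-(u0*(m:ℝ))) * S^m) := by
    rw [show (∑ F : Formula n k m, Xweight n k m u0 γ η F)
        = ∑ F : Formula n k m, ∑ σ : Fin n → Bool,
            γ ^ ((Hscore σ F : ℤ) : ℝ) * η ^ ((Uscore σ F : ℝ) - u0 * m) from rfl,
      Finset.sum_comm]
    have : ∀ σ : Fin n → Bool,
        (∑ F : Formula n k m,
          γ ^ ((Hscore σ F : ℤ) : ℝ) * η ^ ((Uscore σ F : ℝ) - u0 * m))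
          = η ^ (-(u0*(m:ℝ))) * S^m := by
      intro σ
      rw [Finset.sum_congr rfl fun F _ => hterm σ F, ← Finset.mul_sum,
        sum_fun_prod m (w σ), hclause σ]
    rw [Finset.sum_congr rfl fun σ _ => this σ, Finset.sum_const, Finset.card_univ]
    simp [nsmul_eq_mul, Fintype.card_fun]
  -- cardinality of the formula space
  have hcard : (Fintype.card (Formula n k m) : ℝ) = (((n:ℝ)*2)^k)^m := by
    have h1 : Fintype.card (Formula n k m) = ((n*2)^k)^m := by
      simp [Formula, Fintype.card_fun, Fintype.card_prod, Fintype.card_fin, Fintype.card_bool]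
    rw [h1]
    push_cast
    ring
  have hn0 : ((n:ℝ)*2)^k ≠ 0 := by
    have : (0:ℝ) < (n:ℝ)*2 := by
      have : (1:ℝ) ≤ (n:ℝ) := by exact_mod_cast hn
      linarith
    positivity
  -- S in terms of c
  have hSc : S = ((n:ℝ)*2)^k * c := by
    have e1 : ((n:ℝ)*(γ+γ⁻¹))^k = ((n:ℝ)*2)^k * x^k := by
      rw [← mul_pow]; congr 1; rw [hx]; ring
    have e2 : ((n:ℝ)*γ⁻¹)^k = ((n:ℝ)*2)^k * y^k := by
      rw [← mul_pow]; congr 1; rw [hy]; ring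
    rw [hS, hc]
    linear_combination e1 - (1-η) * e2
  -- value of EV
  have hEV : EV (Xweight n k m u0 γ η) = 2^n * η ^ (-(u0*(m:ℝ))) * c^m := by
    have hBm : ((((n:ℝ)*2)^k)^m) ≠ 0 := pow_ne_zero m hn0
    rw [EV, hsumF, hcard, hSc, mul_pow]
    field_simp
  -- simplify gg
  have hhalf : ((1:ℝ)/2) ^ ((1:ℝ)/2) * ((1:ℝ)-1/2) ^ ((1:ℝ)-1/2) = 1/2 := by
    rw [show ((1:ℝ)-1/2) = 1/2 by norm_num, ← Real.rpow_add (by norm_num : (0:ℝ) < 1/2)]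
    norm_num
  have hgg : 2 * gg k u0 ((m:ℝ)/(n:ℝ)) (1/2) γ η
      = 4 * (ff k u0 (1/2) γ η) ^ ((m:ℝ)/(n:ℝ)) := by
    rw [gg, hhalf]
    ring
  have hnR : (n:ℝ) ≠ 0 := by
    have : (1:ℝ) ≤ (n:ℝ) := by exact_mod_cast hn
    linarith
  -- (f^(m/n))^n = f^m
  have hfpow : ((ff k u0 (1/2) γ η) ^ ((m:ℝ)/(n:ℝ)))^n = (ff k u0 (1/2) γ η)^m := by
    rw [← Real.rpow_natCast ((ff k u0 (1/2) γ η) ^ ((m:ℝ)/(n:ℝ))) n,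
      ← Real.rpow_mul hf_nonneg, div_mul_cancel₀ _ hnR, Real.rpow_natCast]
  -- rpow exponent juggling for η
  have hη2 : (η ^ (-(u0*(m:ℝ))))^2 = (η ^ (-(2*u0)))^m := by
    rw [← Real.rpow_natCast (η ^ (-(u0*(m:ℝ)))) 2, ← Real.rpow_natCast (η ^ (-(2*u0))) m,
      ← Real.rpow_mul hη0.le, ← Real.rpow_mul hη0.le]
    congr 1
    push_cast
    ring
  -- final computation
  rw [hEV, hgg, mul_pow 4 (ff k u0 (1/2) γ η ^ ((m:ℝ)/(n:ℝ))) n, hfpow, hff,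
    mul_pow (η ^ (-(2*u0))) (c^2) m, ← hη2, ← pow_right_comm c m 2,
    show (4:ℝ) = 2^2 by norm_num, pow_right_comm 2 2 n]
  ring

end
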